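/- Let L₁, …, L_K : ℝᵈ → ℝ be affine functions, Lᵢ(x) = aᵢ·x + bᵢ, with K ≥ 2. Define recursively z₁(x) = max(L₁(x) − L₂(x), 0), z_i(x) = max(z_{i−1}(x) + L_i(x) − L_{i+1}(x), 0) for i = 2, …, K−1, and z_K(x) = z_{K−1}(x) + L_K(x). Then z_K(x) = max{L₁(x), …, L_K(x)} for all x ∈ ℝᵈ. -/
import Mathlib


/-- The hidden layers of the single-ReLU-per-layer network computing a maximum
of affine functions `Lᵢ(x) = aᵢ⋅x + bᵢ` (indices `0`-based):
`zrec … x i` is the layer `z_{i+1}` of the construction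
`z₁ = max (L₁ - L₂) 0`, `z_i = max (z_{i-1} + L_i - L_{i+1}) 0`. -/
noncomputable def zrec (d : ℕ) (a : ℕ → Fin d → ℝ) (b : ℕ → ℝ) (x : Fin d → ℝ) :
    ℕ → ℝ
  | 0 => max (((∑ l, a 0 l * x l) + b 0) - ((∑ l, a 1 l * x l) + b 1)) 0
  | (i + 1) =>
      max (zrec d a b x i + ((∑ l, a (i + 1) l * x l) + b (i + 1)) -
        ((∑ l, a (i + 2) l * x l) + b (i + 2))) 0

lemma sup'_range_succ (f : ℕ → ℝ) (n : ℕ) :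
    (Finset.range (n + 2)).sup' Finset.nonempty_range_add_one f
      = max ((Finset.range (n + 1)).sup' Finset.nonempty_range_add_one f) (f (n + 1)) := by
  apply le_antisymm
  · apply Finset.sup'_le
    intro i hi
    rcases Nat.lt_succ_iff_lt_or_eq.mp (Finset.mem_range.mp hi) with h | h
    · exact le_max_of_le_left (Finset.le_sup' f (Finset.mem_range.mpr h))
    · subst h; exact le_max_right _ _
  · apply max_le
    · apply Finset.sup'_le
      intro i hi
      apply Finset.le_sup' f
      simp only [Finset.mem_range] at hi ⊢
      omega
    · exact Finset.le_sup' f (by simp)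

lemma sup'_range_one (f : ℕ → ℝ) :
    (Finset.range 1).sup' Finset.nonempty_range_add_one f = f 0 := by
  apply le_antisymm
  · apply Finset.sup'_le
    intro i hi
    simp only [Finset.mem_range, Nat.lt_one_iff] at hi
    subst hi; exact le_rfl
  · exact Finset.le_sup' f (by simp)

lemma max_sub_add (A C : ℝ) : max (A - C) 0 + C = max A C := by
  rw [← max_add_add_right, zero_add, sub_add_cancel]

lemma zrec_range (d K : ℕ) (a : ℕ → Fin d → ℝ) (b : ℕ → ℝ) (x : Fin d → ℝ) :
    zrec d a b x K + ((∑ l, a (K + 1) l * x l) + b (K + 1)) =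
      (Finset.range (K + 2)).sup' Finset.nonempty_range_add_one
        (fun i => (∑ l, a i l * x l) + b i) := by
  induction K with
  | zero =>
    rw [sup'_range_succ, sup'_range_one]
    exact max_sub_add _ _
  | succ K ih =>
    have e : (Finset.range (K + 1 + 2)).sup' Finset.nonempty_range_add_one
          (fun i => (∑ l, a i l * x l) + b i)
        = max ((Finset.range (K + 2)).sup' Finset.nonempty_range_add_one
            (fun i => (∑ l, a i l * x l) + b i))
          ((∑ l, a (K + 2) l * x l) + b (K + 2)) := sup'_range_succ _ (K + 1)
    rw [e, ← ih]
    exact max_sub_add _ _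

/-- **A maximum of `K + 2` affine functions is computed exactly by a
`K + 2`-layer network with one ReLU per layer** (proof of Theorem 1 of the
paper): with `z₁(x) = max (L₁(x) - L₂(x)) 0`,
`z_i(x) = max (z_{i-1}(x) + L_i(x) - L_{i+1}(x)) 0` for `i = 2, …, K+1`, and
`z_{K+2}(x) = z_{K+1}(x) + L_{K+2}(x)`, one has
`z_{K+2}(x) = max {L₁(x), …, L_{K+2}(x)}` for all `x`. -/
theorem relu_network_eq_max_affine (d K : ℕ) (a : ℕ → Fin d → ℝ) (b : ℕ → ℝ)
    (x : Fin d → ℝ) :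
    zrec d a b x K + ((∑ l, a (K + 1) l * x l) + b (K + 1)) =
      Finset.univ.sup' Finset.univ_nonempty
        (fun i : Fin (K + 2) => (∑ l, a (i : ℕ) l * x l) + b (i : ℕ)) := by
  rw [zrec_range]
  apply le_antisymm
  · apply Finset.sup'_le
    intro i hi
    exact Finset.le_sup' (fun j : Fin (K + 2) => (∑ l, a (j : ℕ) l * x l) + b (j : ℕ))
      (Finset.mem_univ (⟨i, Finset.mem_range.mp hi⟩ : Fin (K + 2)))
  · apply Finset.sup'_le
    intro i _
    exact Finset.le_sup' (fun j => (∑ l, a j l * x l) + b j)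
      (Finset.mem_range.mpr i.isLt)
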